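/- arXiv:2010.03520 — 3 statements merged into one kernel-verified Lean document; each statement's English description precedes it below -/
import Mathlib

section
/- Let h ≠ 0 and α ≠ 0 be real numbers and let W : ℝ → ℝ be differentiable. Define f(z,h) := 2α h^{-2} [ W'( h² z / (4α) ) − h² z/(4α) ]. Suppose u, v : ℝ × ℝ → ℝ are differentiable in their second (time) argument and satisfy u_t(x,t) = v(x,t) and v_t(x,t) = h^{-3}[ W'(h u(x+h,t) − h u(x,t)) − W'(h u(x,t) − h u(x−h,t)) ] for all (x,t). Define the discrete Riemann invariants U := 2α(D_h u + v) and V := 2α(D_h u − v), where D_h is the symmetric finite difference (D_h F)(x) := (F(x+h/2) − F(x−h/2))/h acting in the first argument. Then U and V satisfy exactly: U_t = D_h[ U + f(U+V, h) ] and V_t = −D_h[ V + f(U+V, h) ]. -/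
/-- The symmetric finite difference operator `D_h`, acting in the spatial variable. -/
noncomputable def Dh (h : ℝ) (F : ℝ → ℝ) : ℝ → ℝ := fun x =>
  (F (x + h / 2) - F (x - h / 2)) / h

/-!
Since `U + V = 4α D_h u`, the argument `h²(U+V)/(4α)` of `W'` in `f(U+V)` is exactly the
stretched bond `h² D_h u`, and the linear part of `f(U+V)` cancels the `D_h u` term of `U`
(resp. `V`). Hence `U + f(U+V) = 2α v + 2α h⁻² W'(h² D_h u)`, and applying `D_h` to the force
term `W'(h² D_h u)` at half-shifted points reproduces the lattice force `h³ v_t`. Since `∂_t`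
commutes with `D_h`, both sides of each equation equal `2α (D_h v ± v_t)`.
-/

section FiniteDifference

variable {h : ℝ}

theorem Dh_add (F G : ℝ → ℝ) (x : ℝ) :
    Dh h (fun y => F y + G y) x = Dh h F x + Dh h G x := by
  simp only [Dh]
  ring

theorem Dh_const_mul (c : ℝ) (F : ℝ → ℝ) (x : ℝ) :
    Dh h (fun y => c * F y) x = c * Dh h F x := by
  simp only [Dh]
  ring

theorem sq_mul_Dh (hh : h ≠ 0) (F : ℝ → ℝ) (x : ℝ) :
    h ^ 2 * Dh h F x = h * F (x + h / 2) - h * F (x - h / 2) := by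
  simp only [Dh]
  field_simp

theorem Dh_comp_sq_mul_Dh (hh : h ≠ 0) (G F : ℝ → ℝ) (x : ℝ) :
    Dh h (fun y => G (h ^ 2 * Dh h F y)) x
      = (G (h * F (x + h) - h * F x) - G (h * F x - h * F (x - h))) / h := by
  show (G (h ^ 2 * Dh h F (x + h / 2)) - G (h ^ 2 * Dh h F (x - h / 2))) / h = _
  rw [sq_mul_Dh hh, sq_mul_Dh hh, show x + h / 2 + h / 2 = x + h by ring,
    show x + h / 2 - h / 2 = x by ring, show x - h / 2 + h / 2 = x by ring,
    show x - h / 2 - h / 2 = x - h by ring]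

end FiniteDifference

theorem hasDerivAt_Dh {u : ℝ → ℝ → ℝ} {u' : ℝ → ℝ} {t : ℝ}
    (hu : ∀ y, HasDerivAt (u y) (u' y) t) (h x : ℝ) :
    HasDerivAt (fun s => Dh h (fun y => u y s) x) (Dh h u' x) t :=
  ((hu _).sub (hu _)).div_const h

theorem stmt_2_general (h α : ℝ) (hh : h ≠ 0) (hα : α ≠ 0)
    (W : ℝ → ℝ)
    (f : ℝ → ℝ)
    (hf : ∀ z : ℝ, f z = 2 * α / h ^ 2 * (deriv W (h ^ 2 * z / (4 * α)) - h ^ 2 * z / (4 * α)))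
    (u v : ℝ → ℝ → ℝ)
    (hut : ∀ x t : ℝ, HasDerivAt (fun s => u x s) (v x t) t)
    (hvt : ∀ x t : ℝ, HasDerivAt (fun s => v x s)
      ((1 / h ^ 3) * (deriv W (h * u (x + h) t - h * u x t)
        - deriv W (h * u x t - h * u (x - h) t))) t)
    (U V : ℝ → ℝ → ℝ)
    (hU : ∀ x t : ℝ, U x t = 2 * α * (Dh h (fun y => u y t) x + v x t))
    (hV : ∀ x t : ℝ, V x t = 2 * α * (Dh h (fun y => u y t) x - v x t)) :
    ∀ x t : ℝ,
      HasDerivAt (fun s => U x s) (Dh h (fun y => U y t + f (U y t + V y t)) x) t ∧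
      HasDerivAt (fun s => V x s) (-(Dh h (fun y => V y t + f (U y t + V y t)) x)) t := by
  intro x t
  have hf_UV (y : ℝ) : f (U y t + V y t)
      = 2 * α / h ^ 2 * deriv W (h ^ 2 * Dh h (fun y => u y t) y)
        - 2 * α * Dh h (fun y => u y t) y := by
    rw [hf, hU, hV]
    field_simp
    ring_nf
  have hfluxU (y : ℝ) : U y t + f (U y t + V y t)
      = 2 * α * v y t + 2 * α / h ^ 2 * deriv W (h ^ 2 * Dh h (fun y => u y t) y) := by
    rw [hf_UV, hU]
    ring
  have hfluxV (y : ℝ) : V y t + f (U y t + V y t)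
      = -(2 * α) * v y t + 2 * α / h ^ 2 * deriv W (h ^ 2 * Dh h (fun y => u y t) y) := by
    rw [hf_UV, hV]
    ring
  simp only [hfluxU, hfluxV, Dh_add, Dh_const_mul, Dh_comp_sq_mul_Dh hh]
  rw [show (fun s => U x s) = _ from funext (hU x), show (fun s => V x s) = _ from funext (hV x)]
  exact ⟨(((hasDerivAt_Dh (fun y => hut y t) h x).add (hvt x t)).const_mul (2 * α)).congr_deriv
      (by ring),
    (((hasDerivAt_Dh (fun y => hut y t) h x).sub (hvt x t)).const_mul (2 * α)).congr_deriv
      (by ring)⟩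

/-- The discrete Riemann invariants `U = 2α(D_h u + v)`, `V = 2α(D_h u − v)` of the
continuous FPUT system satisfy exactly `U_t = D_h[U + f(U+V)]`, `V_t = −D_h[V + f(U+V)]`. -/
theorem stmt_2 (h α : ℝ) (hh : h ≠ 0) (hα : α ≠ 0)
    (W : ℝ → ℝ) (hW : Differentiable ℝ W)
    (f : ℝ → ℝ)
    (hf : ∀ z : ℝ, f z = 2 * α / h ^ 2 * (deriv W (h ^ 2 * z / (4 * α)) - h ^ 2 * z / (4 * α)))
    (u v : ℝ → ℝ → ℝ)
    (hut : ∀ x t : ℝ, HasDerivAt (fun s => u x s) (v x t) t)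
    (hvt : ∀ x t : ℝ, HasDerivAt (fun s => v x s)
      ((1 / h ^ 3) * (deriv W (h * u (x + h) t - h * u x t)
        - deriv W (h * u x t - h * u (x - h) t))) t)
    (U V : ℝ → ℝ → ℝ)
    (hU : ∀ x t : ℝ, U x t = 2 * α * (Dh h (fun y => u y t) x + v x t))
    (hV : ∀ x t : ℝ, V x t = 2 * α * (Dh h (fun y => u y t) x - v x t)) :
    ∀ x t : ℝ,
      HasDerivAt (fun s => U x s) (Dh h (fun y => U y t + f (U y t + V y t)) x) t ∧
      HasDerivAt (fun s => V x s) (-(Dh h (fun y => V y t + f (U y t + V y t)) x)) t :=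
  stmt_2_general h α hh hα W f hf u v hut hvt U V hU hV
end

section
/- Let 𝕋 = ℝ/ℤ and let U : 𝕋 → ℝ be smooth. Define the maps f(U) := U_x · (U − ⟨U⟩)_{−x} + ⟨U²⟩ − ⟨U⟩² and g(U) := U_{3x} + 6 U U_x on C^∞(𝕋,ℝ), where (U − ⟨U⟩)_{−x} denotes the unique zero-average primitive of U − ⟨U⟩. Then their Lie bracket satisfies [f, g](U) = −3 U_x U_{2x} − 3 U U_{3x} − 3 U² U_x − 9 ⟨U²⟩ U_x + 6 ⟨U⟩² U_x + 6 ⟨U⟩ U U_x + 3 ⟨U⟩ U_{3x}. -/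
open MeasureTheory intervalIntegral Function
open scoped ContDiff

/-- The average `⟨F⟩ = ∫_𝕋 F(x) dx` of a (1-periodic) function on the circle. -/
noncomputable def avg (F : ℝ → ℝ) : ℝ := ∫ x in (0:ℝ)..1, F x

/-- The zero-average primitive `F_{−x}` of a zero-average function `F` on the circle. -/
noncomputable def prim (F : ℝ → ℝ) : ℝ → ℝ := fun x =>
  (∫ t in (0:ℝ)..x, F t) - ∫ s in (0:ℝ)..1, ∫ t in (0:ℝ)..s, F t

/-- The map `f(U) = U_x (U − ⟨U⟩)_{−x} + ⟨U²⟩ − ⟨U⟩²`. -/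
noncomputable def opf (F : ℝ → ℝ) : ℝ → ℝ := fun x =>
  deriv F x * prim (fun y => F y - avg F) x + avg (fun y => F y ^ 2) - (avg F) ^ 2

/-- The KdV map `g(U) = U_{3x} + 6 U U_x`. -/
noncomputable def opg (F : ℝ → ℝ) : ℝ → ℝ := fun x =>
  iteratedDeriv 3 F x + 6 * F x * deriv F x

private lemma h1inf : (1 : WithTop ℕ∞) ≤ ∞ := by
  exact_mod_cast (le_top : (1 : ℕ∞) ≤ ⊤)

private lemma hinf0 : (∞ : WithTop ℕ∞) ≠ 0 := by
  simp

private lemma periodic_deriv_aux {F : ℝ → ℝ} (h : Function.Periodic F 1) :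
    Function.Periodic (deriv F) 1 := fun x => by
  have h1 : (fun y : ℝ => F (y + 1)) = F := funext h
  rw [← deriv_comp_add_const F 1 x, h1]

private lemma integral01_deriv_eq_zero {F : ℝ → ℝ} (hF : ContDiff ℝ ∞ F)
    (h : Function.Periodic F 1) : ∫ y in (0:ℝ)..1, deriv F y = 0 := by
  rw [intervalIntegral.integral_deriv_eq_sub
      (fun x _ => (hF.differentiable hinf0).differentiableAt)
      ((hF.continuous_deriv h1inf).intervalIntegrable 0 1)]
  have h0 := h 0
  norm_num at h0
  rw [h0, sub_self]

private lemma hasDerivAt_primitive {F : ℝ → ℝ} (hF : Continuous F) (x : ℝ) :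
    HasDerivAt (fun u => ∫ t in (0:ℝ)..u, F t) (F x) x :=
  intervalIntegral.integral_hasDerivAt_right (hF.intervalIntegrable 0 x)
    (hF.stronglyMeasurableAtFilter _ _) hF.continuousAt

private lemma prim_hasDerivAt {F : ℝ → ℝ} (hF : Continuous F) (x : ℝ) :
    HasDerivAt (prim F) (F x) x := by
  unfold prim
  exact (hasDerivAt_primitive hF x).sub_const _

private lemma continuous_primitive_aux {F : ℝ → ℝ} (hF : Continuous F) :
    Continuous (fun u => ∫ t in (0:ℝ)..u, F t) := by
  have : Differentiable ℝ (fun u => ∫ t in (0:ℝ)..u, F t) :=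
    fun x => (hasDerivAt_primitive hF x).differentiableAt
  exact this.continuous

private lemma prim_contDiff {F : ℝ → ℝ} (hF : ContDiff ℝ ∞ F) : ContDiff ℝ ∞ (prim F) := by
  rw [contDiff_infty_iff_deriv]
  refine ⟨fun x => (prim_hasDerivAt hF.continuous x).differentiableAt, ?_⟩
  have : deriv (prim F) = F := funext fun x => (prim_hasDerivAt hF.continuous x).deriv
  rw [this]; exact hF

private lemma avg_add_mul {A B : ℝ → ℝ} (hA : Continuous A) (hB : Continuous B) (ε : ℝ) :
    avg (fun y => A y + ε * B y) = avg A + ε * avg B := by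
  unfold avg
  rw [intervalIntegral.integral_add (hA.intervalIntegrable 0 1)
      ((show Continuous fun y => ε * B y from continuous_const.mul hB).intervalIntegrable 0 1),
    intervalIntegral.integral_const_mul]

private lemma prim_add_mul {A B : ℝ → ℝ} (hA : Continuous A) (hB : Continuous B) (ε x : ℝ) :
    prim (fun y => A y + ε * B y) x = prim A x + ε * prim B x := by
  unfold prim
  have hin : ∀ u : ℝ, (∫ t in (0:ℝ)..u, (A t + ε * B t)) =
      (∫ t in (0:ℝ)..u, A t) + ε * ∫ t in (0:ℝ)..u, B t := fun u => by
    rw [intervalIntegral.integral_add (hA.intervalIntegrable 0 u)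
        ((show Continuous fun y => ε * B y from continuous_const.mul hB).intervalIntegrable 0 u),
      intervalIntegral.integral_const_mul]
  simp only [hin]
  rw [intervalIntegral.integral_add ((continuous_primitive_aux hA).intervalIntegrable 0 1)
      ((show Continuous fun u => ε * ∫ t in (0:ℝ)..u, B t from
        continuous_const.mul (continuous_primitive_aux hB)).intervalIntegrable 0 1),
    intervalIntegral.integral_const_mul]
  ring

private lemma deriv_add_mul_apply {A B : ℝ → ℝ} (hA : Differentiable ℝ A)
    (hB : Differentiable ℝ B) (ε x : ℝ) :
    deriv (fun y => A y + ε * B y) x = deriv A x + ε * deriv B x :=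
  (((hA x).hasDerivAt).add (((hB x).hasDerivAt).const_mul ε)).deriv

private lemma deriv_add_mul {A B : ℝ → ℝ} (hA : Differentiable ℝ A) (hB : Differentiable ℝ B)
    (ε : ℝ) : deriv (fun y => A y + ε * B y) = fun y => deriv A y + ε * deriv B y :=
  funext fun y => (((hA y).hasDerivAt).add (((hB y).hasDerivAt).const_mul ε)).deriv

private lemma iteratedDeriv_add_mul (n : ℕ) :
    ∀ (A B : ℝ → ℝ), ContDiff ℝ ∞ A → ContDiff ℝ ∞ B → ∀ ε : ℝ,
      iteratedDeriv n (fun y => A y + ε * B y)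
        = fun y => iteratedDeriv n A y + ε * iteratedDeriv n B y := by
  induction n with
  | zero => intro A B _ _ ε; simp [iteratedDeriv_zero]
  | succ n ih =>
    intro A B hA hB ε
    rw [iteratedDeriv_succ', deriv_add_mul (hA.differentiable hinf0) (hB.differentiable hinf0) ε,
      ih _ _ (contDiff_infty_iff_deriv.mp hA).2 (contDiff_infty_iff_deriv.mp hB).2 ε]
    funext y
    simp only [iteratedDeriv_succ']

/-- The Lie bracket `[f,g](U)` of `f(U) = U_x (U − ⟨U⟩)_{−x} + ⟨U²⟩ − ⟨U⟩²` and
`g(U) = U_{3x} + 6UU_x` equals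
`−3U_xU_{2x} − 3UU_{3x} − 3U²U_x − 9⟨U²⟩U_x + 6⟨U⟩²U_x + 6⟨U⟩UU_x + 3⟨U⟩U_{3x}`. -/
theorem stmt_8 (U : ℝ → ℝ) (hU : ContDiff ℝ (⊤ : ℕ∞) U) (hper : Function.Periodic U 1) :
    ∀ x : ℝ,
      HasDerivAt (fun ε : ℝ =>
          opf (fun y => U y + ε * opg U y) x - opg (fun y => U y + ε * opf U y) x)
        (-3 * deriv U x * iteratedDeriv 2 U x - 3 * U x * iteratedDeriv 3 U x
          - 3 * U x ^ 2 * deriv U x - 9 * avg (fun y => U y ^ 2) * deriv U x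
          + 6 * (avg U) ^ 2 * deriv U x + 6 * avg U * U x * deriv U x
          + 3 * avg U * iteratedDeriv 3 U x) 0 := by
  intro x
  have hU : ContDiff ℝ ∞ U := hU.of_le (by simp)
  set c : ℝ := avg U with hc
  set K1 : ℝ := avg (fun y => U y ^ 2) with hK1
  set U1 : ℝ → ℝ := deriv U with hU1def
  set U2 : ℝ → ℝ := deriv U1 with hU2def
  set U3 : ℝ → ℝ := deriv U2 with hU3def
  set U4 : ℝ → ℝ := deriv U3 with hU4def
  have hU1 : ContDiff ℝ ∞ U1 := (contDiff_infty_iff_deriv.mp hU).2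
  have hU2 : ContDiff ℝ ∞ U2 := (contDiff_infty_iff_deriv.mp hU1).2
  have hU3 : ContDiff ℝ ∞ U3 := (contDiff_infty_iff_deriv.mp hU2).2
  have hU4 : ContDiff ℝ ∞ U4 := (contDiff_infty_iff_deriv.mp hU3).2
  have hUd : ∀ t, HasDerivAt U (U1 t) t := fun t => ((hU.differentiable hinf0) t).hasDerivAt
  have hU1d : ∀ t, HasDerivAt U1 (U2 t) t := fun t => ((hU1.differentiable hinf0) t).hasDerivAt
  have hU2d : ∀ t, HasDerivAt U2 (U3 t) t := fun t => ((hU2.differentiable hinf0) t).hasDerivAt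
  have hU3d : ∀ t, HasDerivAt U3 (U4 t) t := fun t => ((hU3.differentiable hinf0) t).hasDerivAt
  have pU1 : Function.Periodic U1 1 := periodic_deriv_aux hper
  have pU2 : Function.Periodic U2 1 := periodic_deriv_aux pU1
  have hiter2 : iteratedDeriv 2 U = U2 := by
    rw [iteratedDeriv_succ, iteratedDeriv_one, ← hU1def, ← hU2def]
  have hiter3 : iteratedDeriv 3 U = U3 := by
    rw [iteratedDeriv_succ, hiter2, ← hU3def]
  -- G = opg U
  have hGeq : opg U = fun y => U3 y + 6 * U y * U1 y := by
    funext y; rw [opg, hiter3, ← hU1def]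
  have hG : ContDiff ℝ ∞ (opg U) := by
    rw [hGeq]; exact hU3.add ((contDiff_const.mul hU).mul hU1)
  have hGd : ∀ t, HasDerivAt (opg U) (U4 t + (6 * U1 t * U1 t + 6 * U t * U2 t)) t := by
    intro t
    rw [hGeq]
    exact (hU3d t).add (((hUd t).const_mul 6).mul (hU1d t))
  -- avg (opg U) = 0
  have hWd : ∀ t, HasDerivAt (fun y => U2 y + 3 * U y ^ 2) (opg U t) t := by
    intro t
    have h := (hU2d t).add (((hUd t).pow 2).const_mul 3)
    rw [hGeq]
    refine h.congr_deriv ?_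
    push_cast
    ring
  have hWderiv : deriv (fun y => U2 y + 3 * U y ^ 2) = opg U :=
    funext fun t => (hWd t).deriv
  have hWcd : ContDiff ℝ ∞ (fun y => U2 y + 3 * U y ^ 2) :=
    hU2.add (contDiff_const.mul (hU.pow 2))
  have hWper : Function.Periodic (fun y => U2 y + 3 * U y ^ 2) 1 := fun t => by
    simp [pU2 t, hper t]
  have h_avgG : avg (opg U) = 0 := by
    unfold avg
    rw [← hWderiv]
    exact integral01_deriv_eq_zero hWcd hWper
  -- avg of cross term
  have hW2d : ∀ t, HasDerivAt (fun y => 2 * (U y * U2 y) - U1 y ^ 2 + 4 * U y ^ 3)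
      (2 * (U t * opg U t)) t := by
    intro t
    have h := ((((hUd t).mul (hU2d t)).const_mul 2).sub ((hU1d t).pow 2)).add
      (((hUd t).pow 3).const_mul 4)
    rw [hGeq]
    refine h.congr_deriv ?_
    push_cast
    ring
  have hW2cd : ContDiff ℝ ∞ (fun y => 2 * (U y * U2 y) - U1 y ^ 2 + 4 * U y ^ 3) :=
    ((contDiff_const.mul (hU.mul hU2)).sub (hU1.pow 2)).add (contDiff_const.mul (hU.pow 3))
  have hW2per : Function.Periodic (fun y => 2 * (U y * U2 y) - U1 y ^ 2 + 4 * U y ^ 3) 1 :=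
    fun t => by simp [pU2 t, pU1 t, hper t]
  have h_avgUG : avg (fun y => 2 * (U y * opg U y)) = 0 := by
    unfold avg
    have : (fun y => 2 * (U y * opg U y))
        = deriv (fun y => 2 * (U y * U2 y) - U1 y ^ 2 + 4 * U y ^ 3) :=
      funext fun t => ((hW2d t).deriv).symm
    rw [this]
    exact integral01_deriv_eq_zero hW2cd hW2per
  -- prim (opg U)
  have h_primG : ∀ t, prim (opg U) t = U2 t + 3 * U t ^ 2 - 3 * K1 := by
    intro t
    have hint : ∀ u : ℝ, (∫ y in (0:ℝ)..u, opg U y)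
        = (U2 u + 3 * U u ^ 2) - (U2 0 + 3 * U 0 ^ 2) := by
      intro u
      exact intervalIntegral.integral_deriv_eq_sub' _ hWderiv
        (fun y _ => (hWcd.differentiable hinf0) y)
        (hG.continuous.continuousOn)
    unfold prim
    simp only [hint]
    rw [intervalIntegral.integral_sub ((show Continuous fun y => U2 y + 3 * U y ^ 2 from
        hU2.continuous.add
        (continuous_const.mul (hU.continuous.pow 2))).intervalIntegrable 0 1)
      (intervalIntegrable_const)]
    rw [intervalIntegral.integral_add (hU2.continuous.intervalIntegrable 0 1)
      ((show Continuous fun y => 3 * U y ^ 2 from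
        continuous_const.mul (hU.continuous.pow 2)).intervalIntegrable 0 1)]
    have hU2avg : (∫ y in (0:ℝ)..1, U2 y) = 0 := by
      rw [hU2def]; exact integral01_deriv_eq_zero hU1 pU1
    rw [hU2avg, intervalIntegral.integral_const_mul]
    have : (∫ y in (0:ℝ)..1, U y ^ 2) = K1 := rfl
    rw [this]
    simp
  -- H = opf U
  have hHeq : opf U = fun y => U1 y * prim (fun z => U z - c) y + (K1 - c ^ 2) := by
    funext y; rw [opf, ← hU1def, ← hc, ← hK1]; ring
  set P : ℝ → ℝ := prim (fun z => U z - c) with hPdef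
  have hPcont : Continuous (fun z : ℝ => U z - c) := hU.continuous.sub continuous_const
  have hPd : ∀ t, HasDerivAt P (U t - c) t := fun t => prim_hasDerivAt hPcont t
  have hPsm : ContDiff ℝ ∞ P := prim_contDiff (hU.sub contDiff_const)
  have hH : ContDiff ℝ ∞ (opf U) := by
    rw [hHeq]; exact (hU1.mul hPsm).add contDiff_const
  have hHd : ∀ t, HasDerivAt (opf U) (U2 t * P t + U1 t * (U t - c)) t := by
    intro t
    rw [hHeq]
    exact (((hU1d t).mul (hPd t)).add_const _)
  have derivH : deriv (opf U) = fun t => U2 t * P t + U1 t * (U t - c) :=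
    funext fun t => (hHd t).deriv
  have hH2d : ∀ t, HasDerivAt (deriv (opf U))
      ((U3 t * P t + U2 t * (U t - c)) + (U2 t * (U t - c) + U1 t * U1 t)) t := by
    intro t
    rw [derivH]
    exact ((hU2d t).mul (hPd t)).add ((hU1d t).mul ((hUd t).sub_const c))
  have derivH2 : deriv (deriv (opf U))
      = fun t => (U3 t * P t + U2 t * (U t - c)) + (U2 t * (U t - c) + U1 t * U1 t) :=
    funext fun t => (hH2d t).deriv
  have hH3 : iteratedDeriv 3 (opf U) x
      = ((U4 x * P x + U3 x * (U x - c)) + (U3 x * (U x - c) + U2 x * U1 x))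
        + ((U3 x * (U x - c) + U2 x * U1 x) + (U2 x * U1 x + U1 x * U2 x)) := by
    rw [iteratedDeriv_succ, iteratedDeriv_succ, iteratedDeriv_one, derivH2]
    exact (((((hU3d x).mul (hPd x)).add ((hU2d x).mul ((hUd x).sub_const c))).add
      (((hU2d x).mul ((hUd x).sub_const c)).add ((hU1d x).mul (hU1d x)))).deriv)
  -- abbreviations for coefficients
  set G1x : ℝ := U4 x + (6 * U1 x * U1 x + 6 * U x * U2 x) with hG1x
  set Qx : ℝ := U2 x + 3 * U x ^ 2 - 3 * K1 with hQx
  set Hx : ℝ := U1 x * P x + (K1 - c ^ 2) with hHx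
  set H1x : ℝ := U2 x * P x + U1 x * (U x - c) with hH1x
  set H3x : ℝ := ((U4 x * P x + U3 x * (U x - c)) + (U3 x * (U x - c) + U2 x * U1 x))
        + ((U3 x * (U x - c) + U2 x * U1 x) + (U2 x * U1 x + U1 x * U2 x)) with hH3x
  set K2 : ℝ := avg (fun y => opg U y ^ 2) with hK2
  set a : ℝ := U1 x * P x + K1 - c ^ 2 - (U3 x + 6 * U x * U1 x) with ha
  set b : ℝ := G1x * P x + U1 x * Qx - H3x - 6 * (Hx * U1 x + U x * H1x) with hb
  set d2 : ℝ := G1x * Qx + K2 - 6 * Hx * H1x with hd2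
  have funeq : (fun ε : ℝ =>
      opf (fun y => U y + ε * opg U y) x - opg (fun y => U y + ε * opf U y) x)
      = fun ε : ℝ => a + ε * b + ε ^ 2 * d2 := by
    funext ε
    have havgF : avg (fun y => U y + ε * opg U y) = c := by
      rw [avg_add_mul hU.continuous hG.continuous, h_avgG, ← hc]; ring
    have hderivF : deriv (fun y => U y + ε * opg U y) x = U1 x + ε * G1x := by
      rw [deriv_add_mul_apply (hU.differentiable hinf0) (hG.differentiable hinf0),
        (hGd x).deriv, ← hU1def]
    have hprimF : prim (fun y => (U y + ε * opg U y) - avg (fun y => U y + ε * opg U y)) x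
        = P x + ε * Qx := by
      rw [havgF]
      have hfun : (fun y => (U y + ε * opg U y) - c)
          = fun y => (U y - c) + ε * opg U y := by funext y; ring
      rw [hfun, prim_add_mul hPcont hG.continuous, ← hPdef, h_primG x, ← hQx]
    have havgsq : avg (fun y => (U y + ε * opg U y) ^ 2) = K1 + ε ^ 2 * K2 := by
      have hfun : (fun y => (U y + ε * opg U y) ^ 2)
          = fun y => (U y ^ 2 + ε * (2 * (U y * opg U y))) + ε ^ 2 * opg U y ^ 2 := by
        funext y; ring
      rw [hfun]
      rw [avg_add_mul (A := fun y => U y ^ 2 + ε * (2 * (U y * opg U y)))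
          (B := fun y => opg U y ^ 2)
          ((hU.continuous.pow 2).add (continuous_const.mul (continuous_const.mul
          (hU.continuous.mul hG.continuous)))) (hG.continuous.pow 2) (ε ^ 2)]
      rw [avg_add_mul (A := fun y => U y ^ 2) (B := fun y => 2 * (U y * opg U y))
          (hU.continuous.pow 2)
          (continuous_const.mul (hU.continuous.mul hG.continuous)) ε]
      rw [h_avgUG, ← hK1, ← hK2]
      ring
    have hderivHF : deriv (fun y => U y + ε * opf U y) x = U1 x + ε * H1x := by
      rw [deriv_add_mul_apply (hU.differentiable hinf0) (hH.differentiable hinf0),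
        (hHd x).deriv, ← hU1def, ← hH1x]
    have hiterHF : iteratedDeriv 3 (fun y => U y + ε * opf U y) x
        = U3 x + ε * H3x := by
      simp only [iteratedDeriv_add_mul 3 U (opf U) hU hH ε]
      rw [hiter3, hH3]
    have hHval : opf U x = Hx := by simp only [hHeq, hHx]
    show (deriv (fun y => U y + ε * opg U y) x
        * prim (fun y => (U y + ε * opg U y) - avg (fun y => U y + ε * opg U y)) x
        + avg (fun y => (U y + ε * opg U y) ^ 2)
        - avg (fun y => U y + ε * opg U y) ^ 2)
      - (iteratedDeriv 3 (fun y => U y + ε * opf U y) x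
        + 6 * (U x + ε * opf U x) * deriv (fun y => U y + ε * opf U y) x)
      = a + ε * b + ε ^ 2 * d2
    rw [hderivF, hprimF, havgsq, havgF, hderivHF, hiterHF, hHval, ha, hb, hd2]
    ring
  rw [funeq]
  have hpoly : HasDerivAt (fun ε : ℝ => a + ε * b + ε ^ 2 * d2)
      ((0 + 1 * b) + (2 * (0:ℝ) ^ 1 * d2)) 0 := by
    exact ((hasDerivAt_const (0:ℝ) a).add ((hasDerivAt_id (0:ℝ)).mul_const b)).add
      ((hasDerivAt_pow 2 (0:ℝ)).mul_const d2)
  convert hpoly using 1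
  rw [hb, hG1x, hQx, hH3x, hHx, hH1x, hiter2, hiter3]
  ring
end

section
/- Let α ≠ 0, β, γ be real numbers. Define A₁ := 60, A₂ := 20, A₃ := 90(2β/α² − 1), and B₁ := 420, B₂ := 210, B₃ := 42, B₄ := 315(8β/α² − 5), B₅ := 630(12β/α² − 7), B₆ := 630(2β/α² − 1), B₇ := 210(48γ/α³ − 60β/α² + 23), and C₃ := 1/24, C₅ := 1/1920, C₇ := 1/322560 (so that C₅²/(C₃C₇) = 21/10). Define r := 1680 − 72 B₁ + 180 B₂ − 510 B₃ − 72 B₄ + 27 B₅ + 24 B₆ − 9 B₇ + (C₅²/(C₃ C₇)) ( −2400 + 6 A₁² + 670 A₂ − 30 A₁ A₂ − 4 A₂² − 60 A₃ + 3 A₁ A₃ − A₂ A₃ ). Then r = −(7560/α³)(14 α³ − 27 α β + 12 γ). In particular, r = 0 if and only if 14α³ − 27αβ + 12γ = 0, which holds for the Toda parameters β = (2/3)α², γ = (1/3)α³. -/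
/-- The obstruction `r` to asymptotic integrability at order `h⁶` of the FPUT
unidirectional-wave normal form equals `−(7560/α³)(14α³ − 27αβ + 12γ)`; in
particular `r = 0` iff `14α³ − 27αβ + 12γ = 0`, which holds for the Toda
parameters `β = (2/3)α²`, `γ = (1/3)α³`. -/
theorem stmt_19 (α β γ : ℝ) (hα : α ≠ 0)
    (A₁ A₂ A₃ B₁ B₂ B₃ B₄ B₅ B₆ B₇ C₃ C₅ C₇ r : ℝ)
    (hA₁ : A₁ = 60) (hA₂ : A₂ = 20) (hA₃ : A₃ = 90 * (2 * β / α ^ 2 - 1))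
    (hB₁ : B₁ = 420) (hB₂ : B₂ = 210) (hB₃ : B₃ = 42)
    (hB₄ : B₄ = 315 * (8 * β / α ^ 2 - 5))
    (hB₅ : B₅ = 630 * (12 * β / α ^ 2 - 7))
    (hB₆ : B₆ = 630 * (2 * β / α ^ 2 - 1))
    (hB₇ : B₇ = 210 * (48 * γ / α ^ 3 - 60 * β / α ^ 2 + 23))
    (hC₃ : C₃ = 1 / 24) (hC₅ : C₅ = 1 / 1920) (hC₇ : C₇ = 1 / 322560)
    (hr : r = 1680 - 72 * B₁ + 180 * B₂ - 510 * B₃ - 72 * B₄ + 27 * B₅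
      + 24 * B₆ - 9 * B₇
      + C₅ ^ 2 / (C₃ * C₇) * (-2400 + 6 * A₁ ^ 2 + 670 * A₂ - 30 * A₁ * A₂
          - 4 * A₂ ^ 2 - 60 * A₃ + 3 * A₁ * A₃ - A₂ * A₃)) :
    C₅ ^ 2 / (C₃ * C₇) = 21 / 10 ∧
    r = -(7560 / α ^ 3) * (14 * α ^ 3 - 27 * α * β + 12 * γ) ∧
    (r = 0 ↔ 14 * α ^ 3 - 27 * α * β + 12 * γ = 0) ∧
    (β = (2 / 3) * α ^ 2 ∧ γ = (1 / 3) * α ^ 3 →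
      14 * α ^ 3 - 27 * α * β + 12 * γ = 0) := by
  have hC : C₅ ^ 2 / (C₃ * C₇) = 21 / 10 := by
    subst hC₃ hC₅ hC₇
    norm_num
  have hr_eq : r = -(7560 / α ^ 3) * (14 * α ^ 3 - 27 * α * β + 12 * γ) := by
    rw [hr, hC]
    subst hA₁ hA₂ hA₃ hB₁ hB₂ hB₃ hB₄ hB₅ hB₆ hB₇
    field_simp
    ring
  refine ⟨hC, hr_eq, ?_, ?_⟩
  · simp [hr_eq, hα]
  · rintro ⟨rfl, rfl⟩
    ring
end
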